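/- arXiv:1809.08025 — 3 statements merged into one kernel-verified Lean document; each statement's English description precedes it below -/
import Mathlib

section
/- Under the hypotheses of the power balance law, the functional M(t) = (e^{−2γt}/N) ∑_{n=0}^{N-1} |ψ_n(t)|² satisfies dM/dt = (2δ e^{−2γt}/N) ∑_{n=0}^{N-1} |ψ_n(t)|⁴. -/
/-!
Along the flow, `d/dt |ψ_n|² = 2 Re(ψ̇_n conj ψ_n)
  = 2sk Im((Δ_d ψ)_n conj ψ_n) + 2γ|ψ_n|² + 2δ|ψ_n|⁴`.
Summed over one period the coupling term drops out: shifting the index turns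
`∑ ψ_{n-1} conj ψ_n` into the conjugate of `∑ ψ_{n+1} conj ψ_n`, so `∑ (Δ_d ψ)_n conj ψ_n` is real.
Hence `∑ |ψ_n|²` has derivative `2γ ∑ |ψ_n|² + 2δ ∑ |ψ_n|⁴`, and the integrating factor
`e^{-2γt}` removes the linear term.
-/

open Complex ComplexConjugate Finset

theorem Function.Periodic.sum_range_comp_add_one {M : Type*} [AddCommMonoid M] {F : ℤ → M}
    {N : ℕ} (hF : Function.Periodic F N) :
    ∑ n ∈ range N, F (n + 1) = ∑ n ∈ range N, F n := by
  cases N with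
  | zero => simp
  | succ m =>
    rw [sum_range_succ, sum_range_succ' (fun n : ℕ => F n)]
    have hwrap : F ((m : ℤ) + 1) = F 0 := by simpa using hF 0
    push_cast
    rw [hwrap]

theorem im_sum_discreteLaplacian_mul_conj {u : ℤ → ℂ} {N : ℕ} (hu : Function.Periodic u N) :
    (∑ n ∈ range N, (u (n + 1) - 2 * u n + u (n - 1)) * conj (u n)).im = 0 := by
  have hshift : ∑ n ∈ range N, u (n - 1) * conj (u n) =
      conj (∑ n ∈ range N, u (n + 1) * conj (u n)) := by
    have hper : Function.Periodic (fun m : ℤ => u (m - 1) * conj (u m)) N := fun m => by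
      simp only [show m + N - 1 = m - 1 + N by ring, hu m, hu (m - 1)]
    rw [map_sum, ← hper.sum_range_comp_add_one]
    simp [mul_comm]
  have hdiag : ∀ n, (u n * conj (u n)).im = 0 := fun n => by
    rw [mul_conj]; exact ofReal_im _
  simp only [add_mul, sub_mul, sum_add_distrib, sum_sub_distrib, hshift, add_im, sub_im,
    conj_im, im_sum, mul_assoc]
  simp [hdiag]

theorem re_mul_conj_of_dnls {z z' L : ℂ} {c γ δ : ℝ}
    (h : I * z' - c * L + (‖z‖ : ℂ) ^ 2 * z = I * γ * z + I * δ * (‖z‖ : ℂ) ^ 2 * z) :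
    (z' * conj z).re = c * (L * conj z).im + γ * ‖z‖ ^ 2 + δ * ‖z‖ ^ 4 := by
  have hnorm : z * conj z = (‖z‖ : ℂ) ^ 2 := by rw [mul_conj, normSq_eq_norm_sq]; push_cast; rfl
  have hz' : z' = -I * c * L + I * (‖z‖ : ℂ) ^ 2 * z + γ * z + δ * (‖z‖ : ℂ) ^ 2 * z := by
    linear_combination (-I) * h + (z' - γ * z - δ * (‖z‖ : ℂ) ^ 2 * z) * I_sq
  have hprod : z' * conj z = -I * c * (L * conj z) + I * (‖z‖ : ℂ) ^ 4 + γ * (‖z‖ : ℂ) ^ 2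
      + δ * (‖z‖ : ℂ) ^ 4 := by
    rw [hz']
    linear_combination (I * (‖z‖ : ℂ) ^ 2 + γ + δ * (‖z‖ : ℂ) ^ 2) * hnorm
  rw [hprod]
  simp [← ofReal_pow]

theorem HasDerivWithinAt.exp_const_mul_mul {f : ℝ → ℝ} {s : Set ℝ} {c g t : ℝ}
    (hf : HasDerivWithinAt f (-c * f t + g) s t) :
    HasDerivWithinAt (fun τ => Real.exp (c * τ) * f τ) (Real.exp (c * t) * g) s t := by
  have hexp : HasDerivWithinAt (fun τ => Real.exp (c * τ)) (Real.exp (c * t) * c) s t :=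
    ((hasDerivAt_id t).const_mul c).exp.hasDerivWithinAt |>.congr_deriv (by simp)
  exact (hexp.mul hf).congr_deriv (by ring)

theorem hasDerivWithinAt_sum_norm_sq_of_dnls {N : ℕ} {s k γ δ t : ℝ} {S : Set ℝ}
    {ψ : ℝ → ℤ → ℂ} {ψ' : ℤ → ℂ} (hper : Function.Periodic (ψ t) N)
    (hderiv : ∀ n : ℤ, HasDerivWithinAt (fun τ => ψ τ n) (ψ' n) S t)
    (heq : ∀ n : ℤ,
      I * ψ' n - (s : ℂ) * (k : ℂ) * (ψ t (n + 1) - 2 * ψ t n + ψ t (n - 1)) +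
          (‖ψ t n‖ : ℂ) ^ 2 * ψ t n =
        I * (γ : ℂ) * ψ t n + I * (δ : ℂ) * (‖ψ t n‖ : ℂ) ^ 2 * ψ t n) :
    HasDerivWithinAt (fun τ => ∑ n ∈ range N, ‖ψ τ n‖ ^ 2)
      (2 * γ * ∑ n ∈ range N, ‖ψ t n‖ ^ 2 + 2 * δ * ∑ n ∈ range N, ‖ψ t n‖ ^ 4) S t := by
  have hterm (n : ℤ) :=
    re_mul_conj_of_dnls (c := s * k) (γ := γ) (δ := δ) (by rw [ofReal_mul]; exact heq n)
  have hlap := im_sum_discreteLaplacian_mul_conj hper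
  have hsum := HasDerivWithinAt.fun_sum (u := range N) fun (n : ℕ) _ => (hderiv n).norm_sq
  refine hsum.congr_deriv ?_
  simp only [Complex.inner, hterm, mul_add, sum_add_distrib, ← mul_sum, ← im_sum, hlap]
  ring

theorem dnls_M_functional_derivative_general (N : ℕ) (T : ℝ)
    (s : ℝ) (k γ δ : ℝ)
    (ψ ψ' : ℝ → ℤ → ℂ)
    (hper : ∀ t ∈ Set.Icc 0 T, ∀ n : ℤ, ψ t (n + N) = ψ t n)
    (hderiv : ∀ t ∈ Set.Icc 0 T, ∀ n : ℤ,
      HasDerivWithinAt (fun τ => ψ τ n) (ψ' t n) (Set.Icc 0 T) t)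
    (heq : ∀ t ∈ Set.Icc 0 T, ∀ n : ℤ,
      Complex.I * ψ' t n - (s : ℂ) * (k : ℂ) * (ψ t (n + 1) - 2 * ψ t n + ψ t (n - 1)) +
          (‖ψ t n‖ : ℂ) ^ 2 * ψ t n =
        Complex.I * (γ : ℂ) * ψ t n +
          Complex.I * (δ : ℂ) * (‖ψ t n‖ : ℂ) ^ 2 * ψ t n) :
    ∀ t ∈ Set.Icc 0 T,
      HasDerivWithinAt
        (fun τ => Real.exp (-2 * γ * τ) / N *
          ∑ n ∈ Finset.range N, ‖ψ τ (n : ℤ)‖ ^ 2)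
        (2 * δ * Real.exp (-2 * γ * t) / N *
          ∑ n ∈ Finset.range N, ‖ψ t (n : ℤ)‖ ^ 4)
        (Set.Icc 0 T) t := by
  intro t ht
  have hmass := hasDerivWithinAt_sum_norm_sq_of_dnls (hper t ht) (hderiv t ht) (heq t ht)
  have hM := HasDerivWithinAt.exp_const_mul_mul (c := -2 * γ)
    (g := 2 * δ / N * ∑ n ∈ range N, ‖ψ t n‖ ^ 4) ((hmass.div_const N).congr_deriv (by ring))
  convert hM using 1
  · funext τ
    ring
  · ring

theorem dnls_M_functional_derivative (N : ℕ) (hN : 1 ≤ N) (T : ℝ) (hT : 0 ≤ T)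
    (s : ℝ) (hs : s = 1 ∨ s = -1) (k γ δ : ℝ) (hk : 0 < k)
    (ψ ψ' : ℝ → ℤ → ℂ)
    (hper : ∀ t ∈ Set.Icc 0 T, ∀ n : ℤ, ψ t (n + N) = ψ t n)
    (hderiv : ∀ t ∈ Set.Icc 0 T, ∀ n : ℤ,
      HasDerivWithinAt (fun τ => ψ τ n) (ψ' t n) (Set.Icc 0 T) t)
    (heq : ∀ t ∈ Set.Icc 0 T, ∀ n : ℤ,
      Complex.I * ψ' t n - (s : ℂ) * (k : ℂ) * (ψ t (n + 1) - 2 * ψ t n + ψ t (n - 1)) +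
          (‖ψ t n‖ : ℂ) ^ 2 * ψ t n =
        Complex.I * (γ : ℂ) * ψ t n +
          Complex.I * (δ : ℂ) * (‖ψ t n‖ : ℂ) ^ 2 * ψ t n) :
    ∀ t ∈ Set.Icc 0 T,
      HasDerivWithinAt
        (fun τ => Real.exp (-2 * γ * τ) / N *
          ∑ n ∈ Finset.range N, ‖ψ τ (n : ℤ)‖ ^ 2)
        (2 * δ * Real.exp (-2 * γ * t) / N *
          ∑ n ∈ Finset.range N, ‖ψ t (n : ℤ)‖ ^ 4)
        (Set.Icc 0 T) t :=
  dnls_M_functional_derivative_general N T s k γ δ ψ ψ' hper hderiv heq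
end

section
/- Let M : [0,T] → ℝ be C¹, positive, satisfy M(0) > 0 and the differential inequality 2δ e^{2γt} M(t)² ≤ M'(t) for all t ∈ [0,T], with δ > 0 and γ ≠ 0 with γ > −δ M(0). Then T ≤ (1/(2γ)) · ln(1 + γ/(δ M(0))). -/
/-!
Since `(1 / M)' = -M' / M² ≤ -2δ e^{2γt}`, the quantity `1 / M t + (δ / γ) e^{2γt}` is
nonincreasing on `[0, T]`. As `1 / M T > 0`, comparing its values at `T` and `0` gives
`(δ / γ) e^{2γT} < 1 / M 0 + δ / γ`, which is then solved for `T`.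
-/

open Real Set

theorem antitoneOn_inv_add_of_mul_sq_le_deriv {D : Set ℝ} (hD : Convex ℝ D) {f f' g g' : ℝ → ℝ}
    (hf : ∀ t ∈ D, 0 < f t) (hf' : ∀ t ∈ D, HasDerivWithinAt f (f' t) D t)
    (hg : ∀ t, HasDerivAt g (g' t) t) (hle : ∀ t ∈ D, g' t * f t ^ 2 ≤ f' t) :
    AntitoneOn (fun t => (f t)⁻¹ + g t) D := by
  have hderiv : ∀ t ∈ D,
      HasDerivWithinAt (fun t => (f t)⁻¹ + g t) (-f' t / f t ^ 2 + g' t) D t :=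
    fun t ht => ((hf' t ht).inv (hf t ht).ne').add (hg t).hasDerivWithinAt
  refine antitoneOn_of_hasDerivWithinAt_nonpos hD
    (fun t ht => (hderiv t ht).continuousWithinAt)
    (fun t ht => (hderiv t (interior_subset ht)).mono interior_subset) fun t ht => ?_
  have hft := hf t (interior_subset ht)
  have : g' t ≤ f' t / f t ^ 2 := by
    rw [le_div_iff₀ (by positivity)]
    exact hle t (interior_subset ht)
  rw [neg_div]
  linarith

theorem hasDerivAt_div_mul_exp_two_mul {γ : ℝ} (δ : ℝ) (hγ : γ ≠ 0) (t : ℝ) :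
    HasDerivAt (fun t => δ / γ * exp (2 * γ * t)) (2 * δ * exp (2 * γ * t)) t :=
  ((((hasDerivAt_id' t).const_mul (2 * γ)).exp).const_mul (δ / γ)).congr_deriv (by field_simp)

theorem le_one_div_two_mul_log_of_div_mul_exp_lt {γ δ m T : ℝ} (hγ : γ ≠ 0) (hδ : 0 < δ)
    (hm : 0 < m) (hγδm : -(δ * m) < γ) (h : δ / γ * exp (2 * γ * T) < m⁻¹ + δ / γ) :
    T ≤ 1 / (2 * γ) * log (1 + γ / (δ * m)) := by
  have hδm : 0 < δ * m := by positivity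
  have hbase : 0 < 1 + γ / (δ * m) := by
    have : -1 < γ / (δ * m) := by rwa [lt_div_iff₀ hδm, neg_one_mul]
    linarith
  have hscale : 1 + γ / (δ * m) = (m⁻¹ + δ / γ) / (δ / γ) := by
    field_simp
    ring
  rw [one_div_mul_eq_div]
  rcases hγ.lt_or_gt with hneg | hpos
  · have hexp : 1 + γ / (δ * m) < exp (2 * γ * T) := by
      rw [hscale, div_lt_iff_of_neg (div_neg_of_pos_of_neg hδ hneg)]
      linarith
    rw [le_div_iff_of_neg (by linarith)]
    linarith [(log_lt_iff_lt_exp hbase).mpr hexp]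
  · have hexp : exp (2 * γ * T) < 1 + γ / (δ * m) := by
      rw [hscale, lt_div_iff₀ (div_pos hδ hpos)]
      linarith
    rw [le_div_iff₀ (by linarith)]
    linarith [(lt_log_iff_exp_lt hbase).mpr hexp]

theorem collapse_upper_bound (T γ δ : ℝ) (hT : 0 ≤ T) (hδ : 0 < δ) (hγ : γ ≠ 0)
    (M M' : ℝ → ℝ)
    (hpos : ∀ t ∈ Set.Icc 0 T, 0 < M t)
    (hM0 : 0 < M 0)
    (hγstar : γ > -δ * M 0)
    (hderiv : ∀ t ∈ Set.Icc 0 T, HasDerivWithinAt M (M' t) (Set.Icc 0 T) t)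
    (hineq : ∀ t ∈ Set.Icc 0 T, 2 * δ * Real.exp (2 * γ * t) * M t ^ 2 ≤ M' t) :
    T ≤ 1 / (2 * γ) * Real.log (1 + γ / (δ * M 0)) := by
  have hanti := antitoneOn_inv_add_of_mul_sq_le_deriv (convex_Icc 0 T) hpos hderiv
    (hasDerivAt_div_mul_exp_two_mul δ hγ) hineq
  have hvalues := hanti (left_mem_Icc.mpr hT) (right_mem_Icc.mpr hT) hT
  simp only [mul_zero, exp_zero, mul_one] at hvalues
  have hMT : 0 < (M T)⁻¹ := inv_pos.mpr (hpos T (right_mem_Icc.mpr hT))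
  exact le_one_div_two_mul_log_of_div_mul_exp_lt hγ hδ hM0 (by linarith) (by linarith)
end

section
/- Let γ ≠ 0, δ > 0, c > 0 with γ + δc > 0, and define x(t) = γ c / (γ + δc − δc e^{2γt}). Then x solves the initial value problem x'(t) = 2δ e^{2γt} x(t)², x(0) = c, on the interval [0, T*), where T* = (1/(2γ)) ln(1 + γ/(δc)), and x(t) → +∞ as t → T*⁻. -/
/-!
The denominator `D t = γ + δc - δc e^{2γt}` satisfies `D' = -2γδc e^{2γt}`, so the quotient rule
turns `(γc / D)'` into `2δ e^{2γt} (γc / D)²`. Since `e^{2γT*} = (γ + δc)/(δc)`, the denominator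
factors as `δc (e^{2γT*} - e^{2γt})`; monotonicity of `exp` shows that `γ D` is positive before `T*`
and vanishes at `T*`, so `x = γ²c / (γ D)` tends to `+∞` as `t → T*⁻`.
-/

open Real Filter Topology Set

lemma sub_mul_exp_sub_exp_pos {a b : ℝ} (h : a ≠ b) : 0 < (a - b) * (exp a - exp b) := by
  rcases h.lt_or_gt with hab | hab
  · exact mul_pos_of_neg_of_neg (by linarith) (by linarith [exp_lt_exp.mpr hab])
  · exact mul_pos (by linarith) (by linarith [exp_lt_exp.mpr hab])

lemma Filter.Tendsto.inv_atTop_of_tendsto_zero_of_pos {α : Type*} {l : Filter α} {g : α → ℝ}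
    (hg : Tendsto g l (𝓝 0)) (hpos : ∀ᶠ a in l, 0 < g a) : Tendsto (fun a => (g a)⁻¹) l atTop :=
  (tendsto_nhdsWithin_iff.mpr ⟨hg, hpos⟩).inv_tendsto_nhdsGT_zero

namespace ExplicitBlowup

variable (γ δ c : ℝ)

noncomputable def denom (t : ℝ) : ℝ := γ + δ * c - δ * c * exp (2 * γ * t)

noncomputable def solution (t : ℝ) : ℝ := γ * c / denom γ δ c t

noncomputable def blowupTime : ℝ := 1 / (2 * γ) * log (1 + γ / (δ * c))

lemma hasDerivAt_denom (t : ℝ) :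
    HasDerivAt (denom γ δ c) (-(2 * γ * δ * c * exp (2 * γ * t))) t := by
  refine ((((hasDerivAt_id' t).const_mul (2 * γ)).exp.const_mul (δ * c)).const_sub
    (γ + δ * c)).congr_deriv ?_
  ring

lemma hasDerivAt_solution {t : ℝ} (ht : denom γ δ c t ≠ 0) :
    HasDerivAt (solution γ δ c) (2 * δ * exp (2 * γ * t) * solution γ δ c t ^ 2) t := by
  refine ((hasDerivAt_const t (γ * c)).div (hasDerivAt_denom γ δ c t) ht).congr_deriv ?_
  rw [solution]
  field_simp
  ring

variable {γ δ c}

lemma solution_zero (hγ : γ ≠ 0) : solution γ δ c 0 = c := by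
  rw [solution, denom, mul_zero, exp_zero, mul_one, add_sub_cancel_right,
    mul_div_cancel_left₀ c hγ]

lemma exp_two_mul_blowupTime (hγ : γ ≠ 0) (hδc : 0 < δ * c) (hsum : 0 < γ + δ * c) :
    exp (2 * γ * blowupTime γ δ c) = (γ + δ * c) / (δ * c) := by
  have hlog : 2 * γ * blowupTime γ δ c = log ((γ + δ * c) / (δ * c)) := by
    rw [blowupTime, ← mul_assoc, mul_one_div_cancel (mul_ne_zero two_ne_zero hγ), one_mul,
      one_add_div hδc.ne', add_comm (δ * c)]
  rw [hlog, exp_log (div_pos hsum hδc)]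

lemma denom_eq_mul_sub (hγ : γ ≠ 0) (hδc : 0 < δ * c) (hsum : 0 < γ + δ * c) (t : ℝ) :
    denom γ δ c t = δ * c * (exp (2 * γ * blowupTime γ δ c) - exp (2 * γ * t)) := by
  rw [exp_two_mul_blowupTime hγ hδc hsum, mul_sub, mul_div_cancel₀ _ hδc.ne', denom]

lemma denom_blowupTime (hγ : γ ≠ 0) (hδc : 0 < δ * c) (hsum : 0 < γ + δ * c) :
    denom γ δ c (blowupTime γ δ c) = 0 := by
  rw [denom_eq_mul_sub hγ hδc hsum, sub_self, mul_zero]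

lemma mul_denom_pos (hγ : γ ≠ 0) (hδc : 0 < δ * c) (hsum : 0 < γ + δ * c) {t : ℝ}
    (ht : t < blowupTime γ δ c) : 0 < γ * denom γ δ c t := by
  set T := blowupTime γ δ c
  have hmono : 0 < 2 * (T - t) * (γ * (exp (2 * γ * T) - exp (2 * γ * t))) := by
    have := sub_mul_exp_sub_exp_pos (a := 2 * γ * T) (b := 2 * γ * t)
      (by simpa [hγ] using ht.ne')
    linarith
  have hγE := (mul_pos_iff_of_pos_left (by linarith : (0 : ℝ) < 2 * (T - t))).mp hmono
  rw [denom_eq_mul_sub hγ hδc hsum]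
  linarith [mul_pos hδc hγE]

lemma tendsto_solution_blowupTime (hγ : γ ≠ 0) (hc : 0 < c) (hδc : 0 < δ * c)
    (hsum : 0 < γ + δ * c) :
    Tendsto (solution γ δ c) (𝓝[<] blowupTime γ δ c) atTop := by
  have hcont : Continuous fun t => γ * denom γ δ c t := by
    unfold denom
    fun_prop
  have hzero : Tendsto (fun t => γ * denom γ δ c t) (𝓝[<] blowupTime γ δ c) (𝓝 0) := by
    simpa [denom_blowupTime hγ hδc hsum] using
      (hcont.tendsto (blowupTime γ δ c)).mono_left nhdsWithin_le_nhds
  have hpos : ∀ᶠ t in 𝓝[<] blowupTime γ δ c, 0 < γ * denom γ δ c t :=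
    eventually_nhdsWithin_of_forall fun t ht => mul_denom_pos hγ hδc hsum ht
  have hsol : solution γ δ c = fun t => γ ^ 2 * c * (γ * denom γ δ c t)⁻¹ := by
    funext t
    rw [solution]
    field_simp
  rw [hsol]
  exact (hzero.inv_atTop_of_tendsto_zero_of_pos hpos).const_mul_atTop
    (mul_pos (sq_pos_of_ne_zero hγ) hc)

end ExplicitBlowup

open ExplicitBlowup in
theorem explicit_ode_solution_blowup (γ δ c : ℝ) (hδ : 0 < δ) (hγ : γ ≠ 0) (hc : 0 < c)
    (hsum : 0 < γ + δ * c) :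
    (∀ t ∈ Set.Ico (0 : ℝ) (1 / (2 * γ) * Real.log (1 + γ / (δ * c))),
      HasDerivAt (fun τ => γ * c / (γ + δ * c - δ * c * Real.exp (2 * γ * τ)))
        (2 * δ * Real.exp (2 * γ * t) *
          (γ * c / (γ + δ * c - δ * c * Real.exp (2 * γ * t))) ^ 2) t) ∧
    γ * c / (γ + δ * c - δ * c * Real.exp (2 * γ * 0)) = c ∧
    Filter.Tendsto (fun t => γ * c / (γ + δ * c - δ * c * Real.exp (2 * γ * t)))
      (nhdsWithin (1 / (2 * γ) * Real.log (1 + γ / (δ * c)))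
        (Set.Iio (1 / (2 * γ) * Real.log (1 + γ / (δ * c))))) Filter.atTop := by
  have hδc := mul_pos hδ hc
  refine ⟨fun t ht => ?_, solution_zero hγ, tendsto_solution_blowupTime hγ hc hδc hsum⟩
  exact hasDerivAt_solution γ δ c (right_ne_zero_of_mul (mul_denom_pos hγ hδc hsum ht.2).ne')
end
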